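/- Let t be a rational number with t ≠ 0, ±1, ±2, let ξ be a root (in ℂ) of x^2 - t x + 1, let r ≥ 3 be prime, let ζ_j be a primitive r^j-th root of unity, and let z_n be a complex r^n-th root of ξ. Then the splitting field over ℚ of the polynomial (x^2 - tx + 1) · Φ_{r^j}(x) · (C_{r^n}(x) - t) equals ℚ(ξ, ζ_j, z_n), for all n ≥ 1 and j ≥ n. -/

import Mathlib

open Polynomial

/-- Chebyshev polynomial of the first kind (rescaled), as a polynomial over ℚ. -/
noncomputable def chebCPoly : ℕ → Polynomial ℚ
  | 0 => 2
  | 1 => X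
  | n + 2 => X * chebCPoly (n + 1) - chebCPoly n

/-- Auxiliary (second-kind-type) Chebyshev polynomial over ℚ. -/
noncomputable def chebUPoly : ℕ → Polynomial ℚ
  | 0 => 0
  | 1 => 1
  | n + 2 => X * chebUPoly (n + 1) - chebUPoly n

lemma chebC_aeval (m : ℕ) (w : ℂ) (hw : w ≠ 0) :
    aeval (w + w⁻¹) (chebCPoly m) = w ^ m + w⁻¹ ^ m := by
  induction m using Nat.twoStepInduction with
  | zero => rw [show chebCPoly 0 = C 2 by rfl]; simp; norm_num
  | one => simp [chebCPoly]
  | more k ih1 ih2 =>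
    simp only [chebCPoly, map_sub, map_mul, aeval_X, ih1, ih2]
    field_simp
    linear_combination (w⁻¹ ^ k * (w - w⁻¹)) * mul_inv_cancel₀ hw

lemma chebU_aeval (m : ℕ) (w : ℂ) (hw : w ≠ 0) :
    (w - w⁻¹) * aeval (w + w⁻¹) (chebUPoly m) = w ^ m - w⁻¹ ^ m := by
  induction m using Nat.twoStepInduction with
  | zero => simp [chebUPoly]
  | one => simp [chebUPoly]
  | more k ih1 ih2 =>
    simp only [chebUPoly, map_sub, map_mul, aeval_X, mul_sub]
    rw [show (w - w⁻¹) * ((w + w⁻¹) * aeval (w + w⁻¹) (chebUPoly (k+1)))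
        = (w + w⁻¹) * ((w - w⁻¹) * aeval (w + w⁻¹) (chebUPoly (k+1))) by ring,
      ih2, ih1]
    field_simp
    linear_combination (-(w⁻¹ ^ k * (w - w⁻¹))) * mul_inv_cancel₀ hw

theorem splitting_field_eq_adjoin (t : ℚ)
    (ht0 : t ≠ 0) (ht1 : t ≠ 1) (ht1' : t ≠ -1) (ht2 : t ≠ 2) (ht2' : t ≠ -2)
    (r : ℕ) (hr : r.Prime) (hr3 : 3 ≤ r) (n j : ℕ) (hn : 1 ≤ n) (hj : n ≤ j)
    (ξ ζ z : ℂ) (hξ : ξ ^ 2 - (t : ℂ) * ξ + 1 = 0)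
    (hζ : IsPrimitiveRoot ζ (r ^ j)) (hz : z ^ (r ^ n) = ξ) :
    IntermediateField.adjoin ℚ
        (((X ^ 2 - Polynomial.C t * X + 1) * Polynomial.cyclotomic (r ^ j) ℚ *
          (chebCPoly (r ^ n) - Polynomial.C t)).rootSet ℂ) =
      IntermediateField.adjoin ℚ {ξ, ζ, z} := by
  have htC : algebraMap ℚ ℂ t = (t : ℂ) := by norm_num
  have hmpos : 0 < r ^ n := pow_pos hr.pos n
  have hjpos : 0 < r ^ j := pow_pos hr.pos j
  haveI : NeZero (r ^ j) := ⟨hjpos.ne'⟩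
  haveI : NeZero (r ^ n) := ⟨hmpos.ne'⟩
  have hξ0 : ξ ≠ 0 := by
    intro h; rw [h] at hξ; simp at hξ
  have hξinv : ξ⁻¹ = (t : ℂ) - ξ :=
    inv_eq_of_mul_eq_one_right (show ξ * ((t : ℂ) - ξ) = 1 by linear_combination -hξ)
  have hz0 : z ≠ 0 := by
    intro h
    rw [h, zero_pow hmpos.ne'] at hz
    exact hξ0 hz.symm
  -- nonvanishing of the three factors
  have hp1 : (X ^ 2 - Polynomial.C t * X + 1 : ℚ[X]) ≠ 0 := by
    intro h
    have := congrArg (eval 0) h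
    simp at this
  have hp2 : Polynomial.cyclotomic (r ^ j) ℚ ≠ 0 := cyclotomic_ne_zero _ ℚ
  have hp3 : (chebCPoly (r ^ n) - Polynomial.C t : ℚ[X]) ≠ 0 := by
    intro h
    have h1 : aeval ((1 : ℂ) + (1 : ℂ)⁻¹) (chebCPoly (r ^ n) - Polynomial.C t) = 0 := by
      rw [h]; simp
    rw [map_sub, aeval_C, htC, chebC_aeval _ 1 one_ne_zero] at h1
    simp at h1
    have : (t : ℂ) = 2 := by linear_combination -h1
    exact ht2 (by exact_mod_cast this)
  have hP : ((X ^ 2 - Polynomial.C t * X + 1) * Polynomial.cyclotomic (r ^ j) ℚ *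
      (chebCPoly (r ^ n) - Polynomial.C t) : ℚ[X]) ≠ 0 :=
    mul_ne_zero (mul_ne_zero hp1 hp2) hp3
  set K := IntermediateField.adjoin ℚ ({ξ, ζ, z} : Set ℂ) with hK
  have hξK : ξ ∈ K := IntermediateField.subset_adjoin ℚ _ (by simp)
  have hζK : ζ ∈ K := IntermediateField.subset_adjoin ℚ _ (by simp)
  have hzK : z ∈ K := IntermediateField.subset_adjoin ℚ _ (by simp)
  have htK : (t : ℂ) ∈ K := by
    have := K.algebraMap_mem t; rwa [htC] at this
  -- primitive r^n-th root of unity inside K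
  have hζn : IsPrimitiveRoot (ζ ^ r ^ (j - n)) (r ^ n) := by
    have h1 := hζ.pow_of_dvd (pow_ne_zero _ hr.pos.ne') (pow_dvd_pow r (Nat.sub_le j n))
    rwa [Nat.pow_div (Nat.sub_le j n) hr.pos, Nat.sub_sub_self hj] at h1
  have key : ∀ v : ℂ, v ≠ 0 → v ^ (r ^ n) = ξ → v ∈ K := by
    intro v hv0 hv
    have h1 : (v * z⁻¹) ^ (r ^ n) = 1 := by
      rw [mul_pow, hv, inv_pow, hz, mul_inv_cancel₀ hξ0]
    obtain ⟨i, _, hi⟩ := hζn.eq_pow_of_pow_eq_one h1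
    have hv' : v = (ζ ^ r ^ (j - n)) ^ i * z := by
      field_simp at hi
      rw [← hi]
    rw [hv']
    exact mul_mem (pow_mem (pow_mem hζK _) _) hzK
  apply le_antisymm
  · -- all roots lie in K
    rw [IntermediateField.adjoin_le_iff]
    intro x hx
    rw [mem_rootSet] at hx
    obtain ⟨-, hx⟩ := hx
    rw [map_mul, map_mul, mul_eq_zero, mul_eq_zero] at hx
    rcases hx with (hx | hx) | hx
    · -- quadratic factor
      simp only [map_add, map_sub, map_mul, map_pow, aeval_X, aeval_C, map_one, htC] at hx
      have hfac : (x - ξ) * (x - ((t : ℂ) - ξ)) = 0 := by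
        linear_combination hx - hξ
      rcases mul_eq_zero.mp hfac with h | h
      · have : x = ξ := by linear_combination h
        rw [this]; exact hξK
      · have : x = (t : ℂ) - ξ := by linear_combination h
        rw [this]; exact sub_mem htK hξK
    · -- cyclotomic factor
      have hx1 : x ^ (r ^ j) = 1 := by
        have hdvd : Polynomial.cyclotomic (r ^ j) ℂ ∣ X ^ (r ^ j) - 1 :=
          cyclotomic.dvd_X_pow_sub_one (r ^ j) ℂ
        obtain ⟨q, hq⟩ := hdvd
        have h2 : aeval x (Polynomial.cyclotomic (r ^ j) ℚ)
            = eval x (Polynomial.cyclotomic (r ^ j) ℂ) := by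
          rw [aeval_def, eval₂_eq_eval_map, map_cyclotomic]
        have h3 : eval x (X ^ (r ^ j) - 1 : ℂ[X]) = 0 := by
          rw [hq, eval_mul, ← h2, hx, zero_mul]
        simpa [sub_eq_zero] using h3
      obtain ⟨i, _, hi⟩ := hζ.eq_pow_of_pow_eq_one hx1
      rw [← hi]
      exact pow_mem hζK _
    · -- Chebyshev factor
      rw [map_sub, aeval_C, htC, sub_eq_zero] at hx
      obtain ⟨s, hs⟩ := IsAlgClosed.exists_pow_nat_eq (x ^ 2 - 4) (n := 2) (by norm_num)
      set w : ℂ := (x + s) / 2 with hwdef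
      have hww : w ^ 2 - x * w + 1 = 0 := by
        rw [hwdef]
        field_simp
        linear_combination hs
      have hw0 : w ≠ 0 := by
        intro h; rw [h] at hww; simp at hww
      have hwx : w + w⁻¹ = x := by
        have h5 : w + w⁻¹ - x = w⁻¹ * (w ^ 2 - x * w + 1) := by
          field_simp
          ring
        rw [hww, mul_zero, sub_eq_zero] at h5
        exact h5
      have hCt : w ^ (r ^ n) + w⁻¹ ^ (r ^ n) = (t : ℂ) := by
        rw [← chebC_aeval _ w hw0, hwx, hx]
      set u : ℂ := w ^ (r ^ n) with hu
      have hu0 : u ≠ 0 := pow_ne_zero _ hw0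
      have huq : u ^ 2 - (t : ℂ) * u + 1 = 0 := by
        have h4 : w⁻¹ ^ (r ^ n) = u⁻¹ := by rw [← inv_pow]
        rw [h4] at hCt
        have h5 : (u + u⁻¹) * u = (t : ℂ) * u := by rw [hCt]
        rw [add_mul, inv_mul_cancel₀ hu0] at h5
        linear_combination h5
      have hfac : (u - ξ) * (u - ((t : ℂ) - ξ)) = 0 := by
        linear_combination huq - hξ
      rcases mul_eq_zero.mp hfac with h | h
      · have hu' : u = ξ := by linear_combination h
        have hwK : w ∈ K := key w hw0 (by rw [← hu, hu'])
        rw [← hwx]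
        exact add_mem hwK (inv_mem hwK)
      · have hu' : u = (t : ℂ) - ξ := by linear_combination h
        have h5 : (w⁻¹) ^ (r ^ n) = ξ := by
          rw [inv_pow, ← hu, hu', ← hξinv, inv_inv]
        have hwK : w⁻¹ ∈ K := key w⁻¹ (inv_ne_zero hw0) h5
        rw [← hwx]
        exact add_mem (by simpa using inv_mem hwK) hwK
  · -- ξ, ζ, z all lie in the splitting field
    rw [IntermediateField.adjoin_le_iff]
    set L := IntermediateField.adjoin ℚ
        (((X ^ 2 - Polynomial.C t * X + 1) * Polynomial.cyclotomic (r ^ j) ℚ *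
          (chebCPoly (r ^ n) - Polynomial.C t)).rootSet ℂ) with hL
    have hmem : ∀ x : ℂ,
        aeval x ((X ^ 2 - Polynomial.C t * X + 1) * Polynomial.cyclotomic (r ^ j) ℚ *
          (chebCPoly (r ^ n) - Polynomial.C t)) = 0 → x ∈ L := by
      intro x hx
      exact IntermediateField.subset_adjoin ℚ _ (by rw [mem_rootSet]; exact ⟨hP, hx⟩)
    have hξL : ξ ∈ L := by
      apply hmem
      rw [map_mul, map_mul]
      have : aeval ξ (X ^ 2 - Polynomial.C t * X + 1 : ℚ[X]) = 0 := by
        simp only [map_add, map_sub, map_mul, map_pow, aeval_X, aeval_C, map_one, htC]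
        exact hξ
      rw [this, zero_mul, zero_mul]
    have hζL : ζ ∈ L := by
      apply hmem
      rw [map_mul, map_mul]
      have : aeval ζ (Polynomial.cyclotomic (r ^ j) ℚ) = 0 := by
        rw [aeval_def, eval₂_eq_eval_map, map_cyclotomic]
        exact hζ.isRoot_cyclotomic hjpos
      rw [this, mul_zero, zero_mul]
    have htL : (t : ℂ) ∈ L := by
      have := L.algebraMap_mem t; rwa [htC] at this
    -- the root z + z⁻¹ of the Chebyshev factor
    set y : ℂ := z + z⁻¹ with hy
    have hyroot : aeval y (chebCPoly (r ^ n) - Polynomial.C t) = 0 := by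
      rw [map_sub, aeval_C, htC, hy, chebC_aeval _ z hz0, sub_eq_zero, inv_pow, hz, hξinv]
      ring
    have hyL : y ∈ L := by
      apply hmem
      rw [map_mul, hyroot, mul_zero]
    -- get z itself
    have hSL : aeval y (chebUPoly (r ^ n)) ∈ L := by
      have h6 : aeval y (chebUPoly (r ^ n))
          = algebraMap L ℂ (aeval (⟨y, hyL⟩ : L) (chebUPoly (r ^ n))) := by
        rw [← Polynomial.aeval_algebraMap_apply]
        rfl
      rw [h6]
      exact SetLike.coe_mem _
    have hdS : (z - z⁻¹) * aeval y (chebUPoly (r ^ n)) = ξ - ξ⁻¹ := by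
      rw [hy, chebU_aeval _ z hz0, inv_pow, hz]
    have hξd : ξ - ξ⁻¹ ≠ 0 := by
      intro h
      rw [hξinv] at h
      have h7 : 2 * ξ = (t : ℂ) := by linear_combination h
      have h8 : (t : ℂ) ^ 2 = 4 := by
        have : ξ = (t : ℂ) / 2 := by linear_combination h7 / 2
        rw [this] at hξ
        field_simp at hξ
        linear_combination -hξ
      have h9 : ((t - 2) * (t + 2) : ℚ) = 0 := by
        have : (t : ℂ) ^ 2 - 4 = 0 := by linear_combination h8
        have ht : (t : ℚ) ^ 2 - 4 = 0 := by exact_mod_cast this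
        linear_combination ht
      rcases mul_eq_zero.mp h9 with h | h
      · exact ht2 (by linarith [sub_eq_zero.mp h])
      · exact ht2' (by linarith [eq_neg_of_add_eq_zero_left h])
    have hS0 : aeval y (chebUPoly (r ^ n)) ≠ 0 := by
      intro h; rw [h, mul_zero] at hdS; exact hξd hdS.symm
    have hdL : z - z⁻¹ ∈ L := by
      have h10 : z - z⁻¹ = (ξ - ξ⁻¹) * (aeval y (chebUPoly (r ^ n)))⁻¹ := by
        rw [← hdS, mul_assoc, mul_inv_cancel₀ hS0, mul_one]
      rw [h10]
      exact mul_mem (sub_mem hξL (inv_mem hξL)) (inv_mem hSL)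
    have hzL : z ∈ L := by
      have h11 : z = (y + (z - z⁻¹)) * 2⁻¹ := by
        rw [hy]; ring
      rw [h11]
      exact mul_mem (add_mem hyL hdL)
        (inv_mem (show (2 : ℂ) ∈ L by
          rw [show (2 : ℂ) = 1 + 1 by norm_num]; exact add_mem L.one_mem L.one_mem))
    intro x hx
    simp only [Set.mem_insert_iff, Set.mem_singleton_iff] at hx
    rcases hx with rfl | rfl | rfl
    · exact hξL
    · exact hζL
    · exact hzL
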